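/- For every positive integer n and real t ≠ 0, the n-th derivative of the function t ↦ e^(-1/t) equals (-1)^n · e^(-1/t) · Σ_{k=1}^{n} (-1)^k · L(n,k) / t^(n+k), where L(n,k) are the Lah numbers. -/

import Mathlib

open Finset

/-- Stirling numbers of the second kind. -/
def stirling : ℕ → ℕ → ℕ
  | 0, 0 => 1
  | 0, _ + 1 => 0
  | _ + 1, 0 => 0
  | n + 1, k + 1 => stirling n k + (k + 1) * stirling n (k + 1)

/-- Bell numbers, via the standard binomial recurrence. -/
def bell : ℕ → ℕ
  | 0 => 1
  | n + 1 => ∑ k ∈ (Finset.range (n + 1)).attach, Nat.choose n k.1 * bell k.1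
decreasing_by exact Nat.lt_succ_of_le (Nat.lt_succ_iff.mp (Finset.mem_range.mp k.2))

/-- Lah numbers: L(n,k) = C(n-1,k-1) · n!/k! for k ≥ 1, L(0,0)=1, L(n,0)=0 for n ≥ 1. -/
def lah (n k : ℕ) : ℕ :=
  if k = 0 then (if n = 0 then 1 else 0)
  else (n - 1).choose (k - 1) * Nat.factorial n / Nat.factorial k

/-!
For a polynomial `p`, the derivative of `t ↦ p(1/t) · exp(-1/t)` at `t ≠ 0` is
`q(1/t) · exp(-1/t)` with `q = X² (p - p')`. Hence the `n`-th derivative of `exp(-1/t)` is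
`P n (1/t) · exp(-1/t)`, where `P 0 = 1` and `P (n + 1) = X² (P n - (P n)')`, and the Lah
recurrence `L(n+1, k+1) = L(n, k) + (n + k + 1) L(n, k+1)` identifies
`P n = ∑ₖ (-1)^(n+k) L(n, k) X^(n+k)`.
-/

theorem lah_zero_right {n : ℕ} (hn : n ≠ 0) : lah n 0 = 0 := by
  simp [lah, hn]

theorem lah_self (n : ℕ) : lah n n = 1 := by
  rcases n with _ | n
  · rfl
  · simp [lah, Nat.div_self (Nat.factorial_pos _)]

theorem lah_mul_factorial {n k : ℕ} (hk : k ≠ 0) (hkn : k ≤ n) :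
    lah n k * k.factorial = (n - 1).choose (k - 1) * n.factorial := by
  rw [lah, if_neg hk, Nat.div_mul_cancel ((Nat.factorial_dvd_factorial hkn).mul_left _)]

theorem lah_succ_succ {n k : ℕ} (h : k < n) :
    lah (n + 1) (k + 1) = lah n k + (n + k + 1) * lah n (k + 1) := by
  obtain ⟨m, rfl⟩ : ∃ m, n = m + 1 := ⟨n - 1, by omega⟩
  rcases k with _ | i
  · simp [lah, Nat.factorial_succ]
  apply Nat.eq_of_mul_eq_mul_right (Nat.factorial_pos (i + 2))
  rw [Nat.add_mul, Nat.mul_assoc, lah_mul_factorial (by omega) (by omega),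
    lah_mul_factorial (by omega) (by omega), Nat.factorial_succ (i + 1), Nat.mul_left_comm,
    lah_mul_factorial (by omega) (by omega)]
  simp only [Nat.add_sub_cancel]
  rw [Nat.choose_succ_succ, Nat.factorial_succ (m + 1)]
  -- what remains is `(i + 1) C(m, i + 1) = (m - i) C(m, i)`, times `(m + 1)!`
  have hchoose := Nat.choose_succ_right_eq m i
  obtain ⟨d, rfl⟩ : ∃ d, m = i + 1 + d := ⟨m - i - 1, by omega⟩
  rw [show i + 1 + d - i = d + 1 by omega] at hchoose
  nlinarith [hchoose]

open Polynomial

/-- Summing from `k = 0` makes `lahPoly R 0 = 1`; for `n ≠ 0` that term vanishes. -/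
noncomputable def lahPoly (R : Type*) [CommRing R] (n : ℕ) : R[X] :=
  ∑ k ∈ range (n + 1), monomial (n + k) ((-1) ^ (n + k) * (lah n k : R))

section
variable {R : Type*} [CommRing R]

theorem X_sq_mul_derivative_monomial (m : ℕ) (a : R) :
    X ^ 2 * derivative (monomial m a) = monomial (m + 1) (a * m) := by
  rcases m with _ | m
  · simp
  · rw [derivative_monomial_succ, X_pow_mul_monomial]
    push_cast
    rfl

@[simp]
theorem lahPoly_zero : lahPoly R 0 = 1 := by
  simp [lahPoly, lah]

theorem neg_one_pow_mul_lah_succ_succ {n k : ℕ} (h : k < n) :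
    (-1) ^ (n + 1 + (k + 1)) * (lah (n + 1) (k + 1) : R) =
      (-1) ^ (n + k) * (lah n k : R) -
        (-1) ^ (n + (k + 1)) * (lah n (k + 1) : R) * (n + (k + 1) : ℕ) := by
  rw [lah_succ_succ h]
  push_cast
  ring

theorem lahPoly_succ (n : ℕ) :
    lahPoly R (n + 1) = X ^ 2 * (lahPoly R n - derivative (lahPoly R n)) := by
  have hsplit : ∀ j ∈ range n,
      monomial (n + 1 + (j + 1)) ((-1) ^ (n + 1 + (j + 1)) * (lah (n + 1) (j + 1) : R)) =
        monomial (n + j + 2) ((-1) ^ (n + j) * (lah n j : R)) -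
          monomial (n + j + 2)
            ((-1) ^ (n + (j + 1)) * (lah n (j + 1) : R) * (n + (j + 1) : ℕ)) := by
    intro j hj
    rw [neg_one_pow_mul_lah_succ_succ (mem_range.mp hj), ← map_sub,
      show n + 1 + (j + 1) = n + j + 2 by ring]
  have hbottom : (-1) ^ (n + 0) * (lah n 0 : R) * (n + 0 : ℕ) = 0 := by
    rcases eq_or_ne n 0 with rfl | hn <;> simp [lah_zero_right, *]
  rw [lahPoly, sum_range_succ', sum_range_succ, sum_congr rfl hsplit, lahPoly, derivative_sum,
    mul_sub, mul_sum, mul_sum, sum_range_succ, sum_range_succ', sum_sub_distrib]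
  simp only [X_pow_mul_monomial, X_sq_mul_derivative_monomial, lah_self, hbottom,
    lah_zero_right n.succ_ne_zero, Nat.cast_zero, mul_zero, map_zero]
  ring_nf

theorem eval_lahPoly {n : ℕ} (hn : n ≠ 0) (x : R) :
    (lahPoly R n).eval x = ∑ k ∈ Icc 1 n, (-1) ^ (n + k) * (lah n k : R) * x ^ (n + k) := by
  rw [lahPoly, eval_finsetSum, range_eq_Ico, sum_eq_sum_Ico_succ_bot n.succ_pos, zero_add,
    Nat.succ_eq_add_one, Ico_add_one_right_eq_Icc]
  simp [lah_zero_right hn]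

end

theorem hasDerivAt_eval_inv_mul_exp_neg_inv (p : ℝ[X]) {t : ℝ} (ht : t ≠ 0) :
    HasDerivAt (fun s ↦ p.eval s⁻¹ * Real.exp (-s⁻¹))
      ((X ^ 2 * (p - derivative p)).eval t⁻¹ * Real.exp (-t⁻¹)) t := by
  refine (((p.hasDerivAt t⁻¹).mul (hasDerivAt_neg _).exp).comp t
    (hasDerivAt_inv ht)).congr_deriv ?_
  simp only [mul_neg, mul_one, eval_mul, eval_pow, eval_X, inv_pow, eval_sub]
  ring

theorem iteratedDeriv_exp_neg_inv_eqOn (n : ℕ) :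
    Set.EqOn (iteratedDeriv n fun s ↦ Real.exp (-s⁻¹))
      (fun s ↦ (lahPoly ℝ n).eval s⁻¹ * Real.exp (-s⁻¹)) {0}ᶜ := by
  induction n with
  | zero => intro t _; simp
  | succ n ih =>
    intro t ht
    rw [iteratedDeriv_succ, (ih.eventuallyEq_of_mem (isOpen_compl_singleton.mem_nhds ht)).deriv_eq,
      lahPoly_succ]
    exact (hasDerivAt_eval_inv_mul_exp_neg_inv _ ht).deriv

theorem iteratedDeriv_exp_neg_one_div (n : ℕ) (hn : 1 ≤ n) (t : ℝ) (ht : t ≠ 0) :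
    iteratedDeriv n (fun t : ℝ => Real.exp (-(1 / t))) t =
      (-1 : ℝ) ^ n * Real.exp (-(1 / t)) *
        ∑ k ∈ Finset.Icc 1 n, (-1 : ℝ) ^ k * (lah n k : ℝ) / t ^ (n + k) := by
  simp only [one_div]
  rw [iteratedDeriv_exp_neg_inv_eqOn n ht]
  beta_reduce
  rw [eval_lahPoly (by omega), sum_mul, mul_sum]
  refine sum_congr rfl fun k _ ↦ ?_
  rw [inv_pow, pow_add]
  ring
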